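/- (Fisher information of the purifying system.) Let ρ be a full-rank d×d density matrix with spectral decomposition ρ = Σ_j p_j |φ_j⟩⟨φ_j|, p_j > 0, {φ_j} an orthonormal basis, and let H_S be an Hermitian d×d matrix. Define the Hermitian matrix H_A by ⟨φ_a|H_A|φ_b⟩ = −2·(√(p_a p_b)/(p_a + p_b))·⟨φ_b|H_S|φ_a⟩. Then the quantum Fisher information of ρ with respect to H_A equals F_{H_A}(ρ) = Σ_{i,j} (8 p_i p_j (p_i − p_j)² / (p_i + p_j)³) · |⟨φ_i|H_S|φ_j⟩|². In particular, if F_{H_S}(ρ) > 0 then F_{H_A}(ρ) > 0. -/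

import Mathlib

/-! Since `|⟨φ_a|H_A|φ_b⟩|² = (4 p_a p_b / (p_a + p_b)²) |⟨φ_b|H_S|φ_a⟩|²`, each summand of
`F_{H_A}(ρ)` is the transposed summand of `F_{H_S}(ρ)` times a strictly positive factor. -/

open Matrix Complex Filter Kronecker
open scoped ComplexOrder

noncomputable section

/-- n-fold Kronecker power of a matrix, indexed by functions `Fin n → Fin d`. -/
def kronPow {d : ℕ} (X : Matrix (Fin d) (Fin d) ℂ) (n : ℕ) :
    Matrix (Fin n → Fin d) (Fin n → Fin d) ℂ :=
  Matrix.of fun i j => ∏ k, X (i k) (j k)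

/-- The `n`-copy (non-interacting) Hamiltonian `Σᵢ I^{⊗(i-1)} ⊗ H ⊗ I^{⊗(n-i)}`. -/
def nCopyHam {d : ℕ} (H : Matrix (Fin d) (Fin d) ℂ) (n : ℕ) :
    Matrix (Fin n → Fin d) (Fin n → Fin d) ℂ :=
  ∑ k : Fin n, Matrix.of fun i j =>
    H (i k) (j k) * ∏ l ∈ Finset.univ.erase k, (if i l = j l then (1 : ℂ) else 0)

/-- Time evolution unitary `e^{-iHt}`. -/
def timeEvol {m : Type*} [Fintype m] [DecidableEq m] (H : Matrix m m ℂ) (t : ℝ) :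
    Matrix m m ℂ :=
  NormedSpace.exp ((-(Complex.I * (t : ℂ))) • H)

/-- The positive semidefinite square root of a positive semidefinite matrix
(the former `Matrix.PosSemidef.sqrt`). -/
def psdSqrt {m : Type*} [Fintype m] [DecidableEq m] {A : Matrix m m ℂ} (hA : A.PosSemidef) :
    Matrix m m ℂ :=
  (hA.1.eigenvectorUnitary : Matrix m m ℂ) *
    diagonal ((↑) ∘ (fun i => Real.sqrt (hA.1.eigenvalues i))) *
    (star hA.1.eigenvectorUnitary : Matrix m m ℂ)

/-- Trace norm `‖A‖₁ = Tr √(AᴴA)`. -/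
def traceNorm {m : Type*} [Fintype m] [DecidableEq m] (A : Matrix m m ℂ) : ℝ :=
  ((psdSqrt (Matrix.posSemidef_conjTranspose_mul_self A)).trace).re

/-- A quantum channel: a map admitting a Kraus representation. -/
def IsQuantumChannel {m n : Type*} [Fintype m] [DecidableEq m] [Fintype n] [DecidableEq n]
    (E : Matrix m m ℂ → Matrix n n ℂ) : Prop :=
  ∃ (K : ℕ) (A : Fin K → Matrix n m ℂ),
    (∀ X, E X = ∑ k, A k * X * (A k)ᴴ) ∧ (∑ k, (A k)ᴴ * A k = 1)

/-- Time-translation invariance of a map w.r.t. input/output Hamiltonians. -/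
def IsTI {m n : Type*} [Fintype m] [DecidableEq m] [Fintype n] [DecidableEq n]
    (Hin : Matrix m m ℂ) (Hout : Matrix n n ℂ)
    (E : Matrix m m ℂ → Matrix n n ℂ) : Prop :=
  ∀ (t : ℝ) (X : Matrix m m ℂ),
    timeEvol Hout t * E X * timeEvol Hout (-t) =
      E (timeEvol Hin t * X * timeEvol Hin (-t))

/-- Energy variance of a (unit) vector. -/
def varVec {m : Type*} [Fintype m] (H : Matrix m m ℂ) (ψ : m → ℂ) : ℝ :=
  (star ψ ⬝ᵥ ((H * H) *ᵥ ψ)).re - ((star ψ ⬝ᵥ (H *ᵥ ψ)).re) ^ 2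

/-- The quantum Fisher information formula for a given spectral decomposition data. -/
def qfiOf {m : Type*} [Fintype m] (H : Matrix m m ℂ) (p : m → ℝ) (φ : m → m → ℂ) : ℝ :=
  2 * ∑ j, ∑ k,
    if 0 < p j + p k then
      (p j - p k) ^ 2 / (p j + p k) * Complex.normSq (star (φ j) ⬝ᵥ (H *ᵥ φ k))
    else 0

/-- Quantum Fisher information of a Hermitian (e.g. density) matrix `ρ` w.r.t. `H`. -/
def QFI {m : Type*} [Fintype m] [DecidableEq m] {ρ : Matrix m m ℂ}
    (hρ : ρ.IsHermitian) (H : Matrix m m ℂ) : ℝ :=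
  qfiOf H hρ.eigenvalues (fun j i => hρ.eigenvectorBasis j i)

open scoped Classical in
/-- Total positive-semidefinite square root (zero on non-PSD inputs). -/
def msqrt {m : Type*} [Fintype m] [DecidableEq m] (A : Matrix m m ℂ) : Matrix m m ℂ :=
  if h : A.PosSemidef then psdSqrt h else 0

/-- Fidelity `Fid(ρ,σ) = (Tr √(√ρ σ √ρ))² = ‖√σ √ρ‖₁²`. -/
def fid {m : Type*} [Fintype m] [DecidableEq m] (ρ σ : Matrix m m ℂ) : ℝ :=
  (traceNorm (msqrt σ * msqrt ρ)) ^ 2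

/-- Density matrix. -/
def IsDensityMatrix {m : Type*} [Fintype m] (ρ : Matrix m m ℂ) : Prop :=
  ρ.PosSemidef ∧ ρ.trace = 1

theorem Finset.sum_pos_of_pos_imp {ι M : Type*} [AddCommMonoid M] [LinearOrder M]
    [IsOrderedCancelAddMonoid M] {s : Finset ι} {f g : ι → M} (hg : ∀ i ∈ s, 0 ≤ g i)
    (hfg : ∀ i ∈ s, 0 < f i → 0 < g i) (hf : 0 < ∑ i ∈ s, f i) : 0 < ∑ i ∈ s, g i := by
  obtain ⟨i, hi, hfi⟩ := Finset.exists_lt_of_sum_lt (f := fun _ => (0 : M)) (by simpa using hf)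
  exact Finset.sum_pos' hg ⟨i, hi, hfg i hi hfi⟩

theorem neg_two_mul_sqrt_div_mul_self {a b : ℝ} (ha : 0 ≤ a) (hb : 0 ≤ b) :
    (-2 * (√(a * b) / (a + b))) * (-2 * (√(a * b) / (a + b))) = 4 * a * b / (a + b) ^ 2 := by
  rw [← sq, mul_pow, div_pow, Real.sq_sqrt (mul_nonneg ha hb)]
  ring

section qfiOf

variable {m : Type*} [Fintype m] {p : m → ℝ} {φ : m → m → ℂ}

theorem qfiOf_eq_sum_of_pos (H : Matrix m m ℂ) (hp : ∀ j, 0 < p j) :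
    qfiOf H p φ = ∑ j, ∑ k,
      2 * (p j - p k) ^ 2 / (p j + p k) * Complex.normSq (star (φ j) ⬝ᵥ (H *ᵥ φ k)) := by
  simp only [qfiOf, Finset.mul_sum, if_pos (add_pos (hp _) (hp _)), mul_div_assoc, mul_assoc]

theorem qfiOf_eq_sum_of_matrixElements {HS HA : Matrix m m ℂ} (hp : ∀ j, 0 < p j)
    (hHA : ∀ a b, star (φ a) ⬝ᵥ (HA *ᵥ φ b) =
      ((-2 * (Real.sqrt (p a * p b) / (p a + p b)) : ℝ) : ℂ) *
        (star (φ b) ⬝ᵥ (HS *ᵥ φ a))) :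
    qfiOf HA p φ =
      ∑ i, ∑ j, (8 * p i * p j * (p i - p j) ^ 2 / (p i + p j) ^ 3) *
        Complex.normSq (star (φ i) ⬝ᵥ (HS *ᵥ φ j)) := by
  rw [qfiOf_eq_sum_of_pos HA hp, Finset.sum_comm]
  refine Finset.sum_congr rfl fun k _ => Finset.sum_congr rfl fun j _ => ?_
  rw [hHA, Complex.normSq_mul, Complex.normSq_ofReal,
    neg_two_mul_sqrt_div_mul_self (hp j).le (hp k).le]
  have hjk : p j + p k ≠ 0 := (add_pos (hp j) (hp k)).ne'
  have hkj : p k + p j ≠ 0 := (add_pos (hp k) (hp j)).ne'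
  field_simp
  ring

theorem sum_purifying_weight_pos_of_qfiOf_pos {HS : Matrix m m ℂ} (hp : ∀ j, 0 < p j)
    (hHS : 0 < qfiOf HS p φ) :
    0 < ∑ i, ∑ j, (8 * p i * p j * (p i - p j) ^ 2 / (p i + p j) ^ 3) *
      Complex.normSq (star (φ i) ⬝ᵥ (HS *ᵥ φ j)) := by
  have hfactor : ∀ i j, 8 * p i * p j * (p i - p j) ^ 2 / (p i + p j) ^ 3 *
      Complex.normSq (star (φ i) ⬝ᵥ (HS *ᵥ φ j)) = 4 * p i * p j / (p i + p j) ^ 2 *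
      (2 * (p i - p j) ^ 2 / (p i + p j) * Complex.normSq (star (φ i) ⬝ᵥ (HS *ᵥ φ j))) := by
    intro i j
    have hij : p i + p j ≠ 0 := (add_pos (hp i) (hp j)).ne'
    field_simp
    ring
  have hweight_pos : ∀ i j, 0 < 4 * p i * p j / (p i + p j) ^ 2 := fun i j => by
    have := hp i; have := hp j; positivity
  have hterm_nonneg : ∀ i j, 0 ≤ 2 * (p i - p j) ^ 2 / (p i + p j) *
      Complex.normSq (star (φ i) ⬝ᵥ (HS *ᵥ φ j)) := fun i j =>
    mul_nonneg (by have := hp i; have := hp j; positivity) (Complex.normSq_nonneg _)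
  rw [qfiOf_eq_sum_of_pos HS hp] at hHS
  simp only [hfactor]
  exact Finset.sum_pos_of_pos_imp
    (fun i _ => Finset.sum_nonneg fun j _ => mul_nonneg (hweight_pos i j).le (hterm_nonneg i j))
    (fun i _ hi => Finset.sum_pos_of_pos_imp
      (fun j _ => mul_nonneg (hweight_pos i j).le (hterm_nonneg i j))
      (fun j _ hj => mul_pos (hweight_pos i j) hj) hi) hHS

end qfiOf

theorem qfi_of_purifying_system_general
    {d : ℕ} (HS HA : Matrix (Fin d) (Fin d) ℂ)
    (p : Fin d → ℝ) (φ : Fin d → Fin d → ℂ)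
    (hp : ∀ j, 0 < p j)
    (hHA : ∀ a b, star (φ a) ⬝ᵥ (HA *ᵥ φ b) =
      ((-2 * (Real.sqrt (p a * p b) / (p a + p b)) : ℝ) : ℂ) *
        (star (φ b) ⬝ᵥ (HS *ᵥ φ a))) :
    qfiOf HA p φ =
      ∑ i, ∑ j, (8 * p i * p j * (p i - p j) ^ 2 / (p i + p j) ^ 3) *
        Complex.normSq (star (φ i) ⬝ᵥ (HS *ᵥ φ j)) ∧
    (0 < qfiOf HS p φ → 0 < qfiOf HA p φ) := by
  have hHA_eq := qfiOf_eq_sum_of_matrixElements hp hHA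
  exact ⟨hHA_eq, fun hHS => hHA_eq ▸ sum_purifying_weight_pos_of_qfiOf_pos hp hHS⟩

theorem qfi_of_purifying_system
    {d : ℕ} (ρ HS HA : Matrix (Fin d) (Fin d) ℂ)
    (p : Fin d → ℝ) (φ : Fin d → Fin d → ℂ)
    (hp : ∀ j, 0 < p j) (hsum : ∑ j, p j = 1)
    (horth : ∀ a b, star (φ a) ⬝ᵥ φ b = if a = b then (1 : ℂ) else 0)
    (hρdef : ρ = ∑ j, ((p j : ℝ) : ℂ) • Matrix.vecMulVec (φ j) (star (φ j)))
    (hHS : HS.IsHermitian)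
    (hHA : ∀ a b, star (φ a) ⬝ᵥ (HA *ᵥ φ b) =
      ((-2 * (Real.sqrt (p a * p b) / (p a + p b)) : ℝ) : ℂ) *
        (star (φ b) ⬝ᵥ (HS *ᵥ φ a))) :
    qfiOf HA p φ =
      ∑ i, ∑ j, (8 * p i * p j * (p i - p j) ^ 2 / (p i + p j) ^ 3) *
        Complex.normSq (star (φ i) ⬝ᵥ (HS *ᵥ φ j)) ∧
    (0 < qfiOf HS p φ → 0 < qfiOf HA p φ) :=
  qfi_of_purifying_system_general HS HA p φ hp hHA

end
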